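/- arXiv:2410.15055 — 2 statements merged into one kernel-verified Lean document; each statement's English description precedes it below -/
import Mathlib

section
/- Define the chemical collision frequency ν_1(v) = ∫_{ℝ^3×S^2} H(|v−v_*|^2 − 2E/m_{12}) B(|v−v_*|, cosθ) μ_2(v_*) dv_* dσ, where H is the Heaviside function, B(g, cosθ) = C (g_{12}^{34})^{(γ+1)/2} g^{(γ−1)/2} b(cosθ) with g_{12}^{34} = sqrt((m_{12}/m_{34})(g^2 − 2E/m_{12})), C > 0, b ≥ 0 integrable with positive integral over S^2, and μ_2 a centered Gaussian with mass c_2 > 0. Then there exist explicit constants 0 < ν̲ ≤ ν̄ such that ν̲ ⟨v⟩^γ ≤ ν_1(v) ≤ ν̄ ⟨v⟩^γ for all v ∈ ℝ^3. -/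
/-!
Reflecting the sphere so that `(v - v_*)/|v - v_*|` goes to a fixed unit vector shows that the
angular integral of `b` is a positive constant, so `ν₁(v)` is that constant times
`∫ K(|v - v_*|) μ₂(v_*) dv_*`, where `K(g) = H(g² - a) B(g, ·)/b` is at most a multiple of `g^γ`,
and at least one for large `g`. Upper bound: `|v - v_*|^γ ≤ ⟨v⟩^γ (1 + |v_*|)` when `γ ≤ 1`, and
the Gaussian has a finite first moment. Lower bound: on a fixed annulus, the half where
`v · v_* ≤ 0` has `|v - v_*|² ≥ |v|² + |v_*|² ≥ ⟨v⟩²`, `μ₂` is bounded below there, and by the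
symmetry `v_* ↦ -v_*` that half carries at least half the volume of the annulus, whatever `v` is.
-/

open MeasureTheory RealInnerProductSpace Metric Set
open scoped Pointwise

namespace LinearIsometryEquiv

variable {E : Type*} [NormedAddCommGroup E] [NormedSpace ℝ E]

noncomputable def sphereHomeomorph (f : E ≃ₗᵢ[ℝ] E) : sphere (0 : E) 1 ≃ₜ sphere (0 : E) 1 :=
  f.toHomeomorph.subtype fun x => by
    simp only [mem_sphere_zero_iff_norm, coe_toHomeomorph, norm_map]

theorem coe_sphereHomeomorph_apply (f : E ≃ₗᵢ[ℝ] E) (σ : sphere (0 : E) 1) :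
    (f.sphereHomeomorph σ : E) = f σ :=
  rfl

theorem image_coe_preimage_sphereHomeomorph (f : E ≃ₗᵢ[ℝ] E) (s : Set (sphere (0 : E) 1)) :
    ((↑) : sphere (0 : E) 1 → E) '' (f.sphereHomeomorph ⁻¹' s) = f ⁻¹' ((↑) '' s) := by
  ext x
  constructor
  · rintro ⟨σ, hσ, rfl⟩
    exact ⟨f.sphereHomeomorph σ, hσ, rfl⟩
  · rintro ⟨τ, hτ, hτx⟩
    refine ⟨f.sphereHomeomorph.symm τ, by simpa using hτ, ?_⟩
    rw [← f.symm_apply_apply x, ← hτx]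
    rfl

theorem set_smul_preimage (f : E ≃ₗᵢ[ℝ] E) (S : Set ℝ) (t : Set E) :
    S • (f ⁻¹' t) = f ⁻¹' (S • t) := by
  ext x
  simp only [Set.mem_smul, Set.mem_preimage]
  constructor
  · rintro ⟨c, hc, y, hy, rfl⟩
    exact ⟨c, hc, f y, hy, (f.map_smul c y).symm⟩
  · rintro ⟨c, hc, z, hz, hzx⟩
    refine ⟨c, hc, f.symm z, by simpa using hz, f.injective ?_⟩
    rw [f.map_smul, f.apply_symm_apply, hzx]

theorem measurePreserving_sphereHomeomorph [MeasurableSpace E] [BorelSpace E] {μ : Measure E}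
    (f : E ≃ₗᵢ[ℝ] E) (hf : MeasurePreserving f μ μ) :
    MeasurePreserving f.sphereHomeomorph μ.toSphere μ.toSphere := by
  refine ⟨f.sphereHomeomorph.measurable, Measure.ext fun s hs => ?_⟩
  rw [Measure.map_apply f.sphereHomeomorph.measurable hs,
    Measure.toSphere_apply' _ (hs.preimage f.sphereHomeomorph.measurable),
    Measure.toSphere_apply' _ hs, image_coe_preimage_sphereHomeomorph, set_smul_preimage,
    hf.measure_preimage_emb f.toHomeomorph.measurableEmbedding]

end LinearIsometryEquiv

section AngularIntegral

variable {E F : Type*} [NormedAddCommGroup E] [InnerProductSpace ℝ E] [FiniteDimensional ℝ E]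
  [MeasurableSpace E] [BorelSpace E] [NormedAddCommGroup F] [NormedSpace ℝ F]

theorem integral_toSphere_inner_eq_of_norm_eq (g : ℝ → F) {e e' : E} (h : ‖e‖ = ‖e'‖) :
    ∫ σ, g ⟪e, (σ : E)⟫ ∂(volume : Measure E).toSphere
      = ∫ σ, g ⟪e', (σ : E)⟫ ∂(volume : Measure E).toSphere := by
  set f : E ≃ₗᵢ[ℝ] E := Submodule.reflection (ℝ ∙ (e' - e))ᗮ
  have hfe : f e' = e := Submodule.reflection_sub h.symm
  rw [← (f.measurePreserving_sphereHomeomorph f.measurePreserving).integral_comp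
    f.sphereHomeomorph.measurableEmbedding]
  refine integral_congr_ae (ae_of_all _ fun σ => ?_)
  simp only [LinearIsometryEquiv.coe_sphereHomeomorph_apply]
  rw [← hfe, f.inner_map_map]

variable [Nontrivial E]

theorem integral_integral_toSphere_inner_normalize (f : E → ℝ) (b : ℝ → ℝ) (v : E) {e : E}
    (he : ‖e‖ = 1) :
    ∫ w, ∫ σ, f w * b ⟪‖v - w‖⁻¹ • (v - w), (σ : E)⟫ ∂(volume : Measure E).toSphere
      = (∫ w, f w) * ∫ σ, b ⟪e, (σ : E)⟫ ∂(volume : Measure E).toSphere := by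
  rw [← integral_mul_const]
  refine integral_congr_ae ?_
  filter_upwards [compl_mem_ae_iff.mpr (measure_singleton v)] with w hw
  have hvw : ‖v - w‖ ≠ 0 := norm_ne_zero_iff.mpr (sub_ne_zero.mpr (Ne.symm hw))
  have hunit : ‖‖v - w‖⁻¹ • (v - w)‖ = ‖e‖ := by
    rw [norm_smul, norm_inv, norm_norm, inv_mul_cancel₀ hvw, he]
  rw [integral_const_mul, integral_toSphere_inner_eq_of_norm_eq b hunit]

end AngularIntegral

section ThresholdKernel

/-- `H(g² - a) B(g, ·) / b` as a function of the relative speed `g`, where `κ = m₁₂ / m₃₄` and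
`a = 2E / m₁₂`. -/
noncomputable def thresholdKernel (C κ a γ g : ℝ) : ℝ :=
  (if 0 ≤ g ^ 2 - a then 1 else 0) * C * √(κ * (g ^ 2 - a)) ^ ((γ + 1) / 2) * g ^ ((γ - 1) / 2)

variable {C κ a γ g : ℝ}

theorem measurable_thresholdKernel : Measurable (thresholdKernel C κ a γ) := by
  have hH : Measurable fun g : ℝ => if 0 ≤ g ^ 2 - a then (1 : ℝ) else 0 :=
    Measurable.ite (measurableSet_le measurable_const (by fun_prop)) measurable_const
      measurable_const
  unfold thresholdKernel
  fun_prop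

theorem thresholdKernel_nonneg (hC : 0 ≤ C) (hg : 0 ≤ g) : 0 ≤ thresholdKernel C κ a γ g := by
  unfold thresholdKernel
  split_ifs <;> positivity

theorem sqrt_mul_eq_sqrt_mul_sq (hκ : 0 ≤ κ) (hg : 0 ≤ g) : √κ * g = √(κ * g ^ 2) := by
  rw [Real.sqrt_mul hκ, Real.sqrt_sq hg]

theorem sqrt_mul_rpow_mul_rpow (hκ : 0 ≤ κ) (hg : 0 < g) :
    (√κ * g) ^ ((γ + 1) / 2) * g ^ ((γ - 1) / 2) = κ ^ ((γ + 1) / 4) * g ^ γ := by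
  rw [Real.mul_rpow (Real.sqrt_nonneg _) hg.le, Real.sqrt_eq_rpow, ← Real.rpow_mul hκ, mul_assoc,
    ← Real.rpow_add hg]
  ring_nf

theorem thresholdKernel_le (hC : 0 ≤ C) (hκ : 0 ≤ κ) (ha : 0 ≤ a) (hγ : 0 ≤ γ) (hg : 0 ≤ g) :
    thresholdKernel C κ a γ g ≤ C * κ ^ ((γ + 1) / 4) * g ^ γ := by
  rcases hg.eq_or_lt with rfl | hg
  · have hsqrt : √(κ * ((0 : ℝ) ^ 2 - a)) = 0 := Real.sqrt_eq_zero'.mpr (by nlinarith)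
    rw [thresholdKernel, hsqrt, Real.zero_rpow (by linarith)]
    simp only [mul_zero, zero_mul]
    positivity
  calc thresholdKernel C κ a γ g ≤ C * (√κ * g) ^ ((γ + 1) / 2) * g ^ ((γ - 1) / 2) := by
        unfold thresholdKernel
        split_ifs
        · rw [one_mul]
          gcongr
          rw [sqrt_mul_eq_sqrt_mul_sq hκ hg.le]
          gcongr
          linarith
        · simp only [zero_mul]
          positivity
    _ = C * κ ^ ((γ + 1) / 4) * g ^ γ := by rw [mul_assoc, sqrt_mul_rpow_mul_rpow hκ hg, mul_assoc]

theorem le_thresholdKernel (hC : 0 ≤ C) (hκ : 0 ≤ κ) (hγ : 0 ≤ γ) (hg : 0 < g)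
    (hga : 2 * a ≤ g ^ 2) :
    C * (κ / 2) ^ ((γ + 1) / 4) * g ^ γ ≤ thresholdKernel C κ a γ g := by
  have hpos : 0 ≤ g ^ 2 - a := by nlinarith
  rw [mul_assoc, ← sqrt_mul_rpow_mul_rpow (by positivity) hg, thresholdKernel, if_pos hpos,
    one_mul, mul_assoc]
  gcongr
  rw [sqrt_mul_eq_sqrt_mul_sq (by positivity) hg.le]
  exact Real.sqrt_le_sqrt (by nlinarith)

end ThresholdKernel

section Weights

theorem rpow_div_two_eq_sqrt_rpow {x : ℝ} (hx : 0 ≤ x) (γ : ℝ) : x ^ (γ / 2) = √x ^ γ := by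
  rw [Real.sqrt_eq_rpow, ← Real.rpow_mul hx, one_div_mul_eq_div]

variable {F : Type*}

theorem norm_sub_rpow_le [SeminormedAddCommGroup F] (v w : F) {γ : ℝ} (hγ0 : 0 ≤ γ)
    (hγ1 : γ ≤ 1) : ‖v - w‖ ^ γ ≤ (1 + ‖v‖ ^ 2) ^ (γ / 2) * (1 + ‖w‖) := by
  have hv : ‖v‖ ≤ √(1 + ‖v‖ ^ 2) := Real.le_sqrt_of_sq_le (by linarith)
  have h1 : 1 ≤ √(1 + ‖v‖ ^ 2) := Real.le_sqrt_of_sq_le (by nlinarith [sq_nonneg ‖v‖])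
  have hvw : ‖v - w‖ ≤ √(1 + ‖v‖ ^ 2) * (1 + ‖w‖) := by
    nlinarith [norm_sub_le v w, norm_nonneg w]
  rw [rpow_div_two_eq_sqrt_rpow (by positivity)]
  calc ‖v - w‖ ^ γ ≤ (√(1 + ‖v‖ ^ 2) * (1 + ‖w‖)) ^ γ := by gcongr
    _ = √(1 + ‖v‖ ^ 2) ^ γ * (1 + ‖w‖) ^ γ := Real.mul_rpow (by positivity) (by positivity)
    _ ≤ √(1 + ‖v‖ ^ 2) ^ γ * (1 + ‖w‖) := by
        gcongr
        simpa using Real.rpow_le_rpow_of_exponent_le (le_add_of_nonneg_right (norm_nonneg w)) hγ1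

variable [NormedAddCommGroup F] [InnerProductSpace ℝ F] {v w : F}

theorem norm_sq_add_norm_sq_le_of_inner_nonpos (h : ⟪v, w⟫ ≤ 0) :
    ‖v‖ ^ 2 + ‖w‖ ^ 2 ≤ ‖v - w‖ ^ 2 := by
  rw [norm_sub_sq_real]
  linarith

theorem norm_le_norm_sub_of_inner_nonpos (h : ⟪v, w⟫ ≤ 0) : ‖w‖ ≤ ‖v - w‖ :=
  (pow_le_pow_iff_left₀ (norm_nonneg _) (norm_nonneg _) two_ne_zero).mp
    (by nlinarith [norm_sq_add_norm_sq_le_of_inner_nonpos h])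

theorem rpow_le_norm_sub_rpow_of_inner_nonpos (h : ⟪v, w⟫ ≤ 0) (hw : 1 ≤ ‖w‖) {γ : ℝ}
    (hγ : 0 ≤ γ) : (1 + ‖v‖ ^ 2) ^ (γ / 2) ≤ ‖v - w‖ ^ γ := by
  rw [rpow_div_two_eq_sqrt_rpow (by positivity)]
  gcongr
  rw [Real.sqrt_le_left (norm_nonneg _)]
  nlinarith [norm_sq_add_norm_sq_le_of_inner_nonpos h]

end Weights

section Annulus

variable {E : Type*} [NormedAddCommGroup E] [MeasurableSpace E]

theorem measure_le_two_mul_measure_inter_inner_nonpos [InnerProductSpace ℝ E] [MeasurableNeg E]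
    (μ : Measure E) [μ.IsNegInvariant] {s : Set E} (hs : -s = s) (v : E) :
    μ s ≤ 2 * μ (s ∩ {w | ⟪v, w⟫ ≤ 0}) := by
  set A := s ∩ {w | ⟪v, w⟫ ≤ 0}
  have hcover : s ⊆ A ∪ -A := by
    intro w hw
    rcases le_or_gt ⟪v, w⟫ 0 with h | h
    · exact Or.inl ⟨hw, h⟩
    · refine Or.inr ⟨by rwa [← hs, Set.neg_mem_neg], ?_⟩
      simp only [mem_ofPred_eq, inner_neg_right]
      linarith
  calc μ s ≤ μ (A ∪ -A) := measure_mono hcover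
    _ ≤ μ A + μ (-A) := measure_union_le _ _
    _ = 2 * μ A := by rw [Measure.measure_neg, two_mul]

theorem measure_norm_preimage_Ioo_pos [NormedSpace ℝ E] [Nontrivial E] [OpensMeasurableSpace E]
    (μ : Measure E) [μ.IsOpenPosMeasure] {r s : ℝ} (hr : 0 ≤ r) (hrs : r < s) :
    0 < μ ((‖·‖) ⁻¹' Ioo r s) := by
  obtain ⟨x, hx⟩ := exists_norm_eq E (c := (r + s) / 2) (by linarith)
  refine (isOpen_Ioo.preimage continuous_norm).measure_pos μ ⟨x, ?_⟩
  simp only [mem_preimage, hx, mem_Ioo]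
  constructor <;> linarith

end Annulus

section Gaussian

variable {E : Type*} [NormedAddCommGroup E]

theorem one_add_mul_exp_neg_mul_sq_le {β : ℝ} (hβ : 0 < β) (x : ℝ) :
    (1 + x) * Real.exp (-β * x ^ 2) ≤ Real.exp (1 / (2 * β)) * Real.exp (-(β / 2) * x ^ 2) := by
  rw [← Real.exp_add]
  calc (1 + x) * Real.exp (-β * x ^ 2) ≤ Real.exp x * Real.exp (-β * x ^ 2) := by
        gcongr
        linarith [Real.add_one_le_exp x]
    _ ≤ Real.exp (1 / (2 * β) + -(β / 2) * x ^ 2) := by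
        rw [← Real.exp_add, Real.exp_le_exp]
        have : x - β / 2 * x ^ 2 ≤ 1 / (2 * β) := by
          rw [le_div_iff₀ (by positivity)]
          nlinarith [sq_nonneg (β * x - 1)]
        linarith

theorem exists_pos_le_mul_exp_neg_mul_sq_norm {c β : ℝ} (hc : 0 < c) (hβ : 0 ≤ β) (r : ℝ) :
    ∃ c' > 0, ∀ w : E, ‖w‖ ≤ r → c' ≤ c * Real.exp (-β * ‖w‖ ^ 2) := by
  refine ⟨c * Real.exp (-β * r ^ 2), by positivity, fun w hw => ?_⟩
  have : ‖w‖ ^ 2 ≤ r ^ 2 := pow_le_pow_left₀ (norm_nonneg w) hw 2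
  exact mul_le_mul_of_nonneg_left (Real.exp_le_exp.mpr (by nlinarith)) hc.le

variable [InnerProductSpace ℝ E] [FiniteDimensional ℝ E] [MeasurableSpace E] [BorelSpace E]

theorem integrable_exp_neg_mul_sq_norm {β : ℝ} (hβ : 0 < β) :
    Integrable fun w : E => Real.exp (-β * ‖w‖ ^ 2) := by
  refine (GaussianFourier.integrable_cexp_neg_mul_sq_norm_add (V := E) (b := β)
    (by simpa using hβ) 0 0).norm.congr (ae_of_all _ fun w => ?_)
  simp only [zero_mul, add_zero, Complex.norm_exp]
  norm_cast

theorem integrable_one_add_norm_mul_exp_neg_mul_sq_norm {c β : ℝ} (hβ : 0 < β) :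
    Integrable fun w : E => (1 + ‖w‖) * (c * Real.exp (-β * ‖w‖ ^ 2)) := by
  refine Integrable.mono' (((integrable_exp_neg_mul_sq_norm (half_pos hβ)).const_mul
    (|c| * Real.exp (1 / (2 * β))))) (by fun_prop) (ae_of_all _ fun w => ?_)
  rw [Real.norm_eq_abs, abs_mul, abs_mul, abs_of_nonneg (by positivity : (0 : ℝ) ≤ 1 + ‖w‖),
    abs_of_pos (Real.exp_pos _)]
  calc (1 + ‖w‖) * (|c| * Real.exp (-β * ‖w‖ ^ 2))
      = |c| * ((1 + ‖w‖) * Real.exp (-β * ‖w‖ ^ 2)) := by ring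
    _ ≤ |c| * (Real.exp (1 / (2 * β)) * Real.exp (-(β / 2) * ‖w‖ ^ 2)) := by
        gcongr _ * ?_
        exact one_add_mul_exp_neg_mul_sq_le hβ ‖w‖
    _ = |c| * Real.exp (1 / (2 * β)) * Real.exp (-(β / 2) * ‖w‖ ^ 2) := by ring

end Gaussian

section KernelIntegral

variable {E : Type*} [NormedAddCommGroup E] {K : ℝ → ℝ} {ρ : E → ℝ} {A γ : ℝ}

theorem kernel_norm_sub_mul_le (hA : 0 ≤ A) (hKle : ∀ g, 0 ≤ g → K g ≤ A * g ^ γ)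
    (hγ0 : 0 ≤ γ) (hγ1 : γ ≤ 1) (hρ0 : ∀ w, 0 ≤ ρ w) (v w : E) :
    K ‖v - w‖ * ρ w ≤ A * (1 + ‖v‖ ^ 2) ^ (γ / 2) * ((1 + ‖w‖) * ρ w) :=
  calc K ‖v - w‖ * ρ w ≤ A * ‖v - w‖ ^ γ * ρ w :=
        mul_le_mul_of_nonneg_right (hKle _ (norm_nonneg _)) (hρ0 w)
    _ ≤ A * ((1 + ‖v‖ ^ 2) ^ (γ / 2) * (1 + ‖w‖)) * ρ w := by
        gcongr
        · exact hρ0 w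
        · exact norm_sub_rpow_le v w hγ0 hγ1
    _ = A * (1 + ‖v‖ ^ 2) ^ (γ / 2) * ((1 + ‖w‖) * ρ w) := by ring

variable [MeasurableSpace E] {μ : Measure E}

theorem integrable_kernel_norm_sub_mul [OpensMeasurableSpace E] (hK : Measurable K)
    (hK0 : ∀ g, 0 ≤ g → 0 ≤ K g) (hA : 0 ≤ A) (hKle : ∀ g, 0 ≤ g → K g ≤ A * g ^ γ)
    (hγ0 : 0 ≤ γ) (hγ1 : γ ≤ 1) (hρ : AEStronglyMeasurable ρ μ) (hρ0 : ∀ w, 0 ≤ ρ w)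
    (hρint : Integrable (fun w => (1 + ‖w‖) * ρ w) μ) (v : E) :
    Integrable (fun w => K ‖v - w‖ * ρ w) μ := by
  have hKm : Measurable fun w => K ‖v - w‖ :=
    hK.comp (continuous_const.sub continuous_id).norm.measurable
  refine (hρint.const_mul (A * (1 + ‖v‖ ^ 2) ^ (γ / 2))).mono'
    (hKm.aestronglyMeasurable.mul hρ) (ae_of_all _ fun w => ?_)
  rw [Real.norm_of_nonneg (mul_nonneg (hK0 _ (norm_nonneg _)) (hρ0 w))]
  exact kernel_norm_sub_mul_le hA hKle hγ0 hγ1 hρ0 v w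

theorem integral_kernel_norm_sub_mul_le (hK0 : ∀ g, 0 ≤ g → 0 ≤ K g) (hA : 0 ≤ A)
    (hKle : ∀ g, 0 ≤ g → K g ≤ A * g ^ γ) (hγ0 : 0 ≤ γ) (hγ1 : γ ≤ 1) (hρ0 : ∀ w, 0 ≤ ρ w)
    (hρint : Integrable (fun w => (1 + ‖w‖) * ρ w) μ) (v : E) :
    ∫ w, K ‖v - w‖ * ρ w ∂μ ≤ A * (∫ w, (1 + ‖w‖) * ρ w ∂μ) * (1 + ‖v‖ ^ 2) ^ (γ / 2) :=
  calc ∫ w, K ‖v - w‖ * ρ w ∂μ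
      ≤ ∫ w, A * (1 + ‖v‖ ^ 2) ^ (γ / 2) * ((1 + ‖w‖) * ρ w) ∂μ :=
        integral_mono_of_nonneg (ae_of_all _ fun w => mul_nonneg (hK0 _ (norm_nonneg _)) (hρ0 w))
          (hρint.const_mul _) (ae_of_all _ (kernel_norm_sub_mul_le hA hKle hγ0 hγ1 hρ0 v))
    _ = A * (∫ w, (1 + ‖w‖) * ρ w ∂μ) * (1 + ‖v‖ ^ 2) ^ (γ / 2) := by
        rw [integral_const_mul]
        ring

theorem exists_le_integral_kernel_norm_sub_mul [InnerProductSpace ℝ E] [FiniteDimensional ℝ E]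
    [Nontrivial E] [BorelSpace E] (μ : Measure E) [μ.IsAddHaarMeasure] {R c : ℝ} (hR : 1 ≤ R)
    (hc : 0 < c) (hK0 : ∀ g, 0 ≤ g → 0 ≤ K g) (hKge : ∀ g, R ≤ g → c * g ^ γ ≤ K g)
    (hγ : 0 ≤ γ) (hρ0 : ∀ w, 0 ≤ ρ w) (hρpos : ∃ c' > 0, ∀ w, ‖w‖ ≤ R + 1 → c' ≤ ρ w)
    (hint : ∀ v, Integrable (fun w => K ‖v - w‖ * ρ w) μ) :
    ∃ c' > 0, ∀ v, c' * (1 + ‖v‖ ^ 2) ^ (γ / 2) ≤ ∫ w, K ‖v - w‖ * ρ w ∂μ := by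
  obtain ⟨ρ₀, hρ₀, hρ₀le⟩ := hρpos
  set S : Set E := (‖·‖) ⁻¹' Ioo R (R + 1)
  have hSmeas : MeasurableSet S := continuous_norm.measurable measurableSet_Ioo
  have hSfin : μ S ≠ ⊤ := ((measure_mono fun w (hw : w ∈ S) =>
    mem_closedBall_zero_iff.mpr hw.2.le).trans_lt measure_closedBall_lt_top).ne
  have hSpos : 0 < μ.real S :=
    ENNReal.toReal_pos (measure_norm_preimage_Ioo_pos μ (by linarith) (by linarith)).ne' hSfin
  have hSneg : -S = S := by ext w; simp [S]
  refine ⟨c * ρ₀ * μ.real S / 2, by positivity, fun v => ?_⟩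
  set A := S ∩ {w | ⟪v, w⟫ ≤ 0}
  have hAmeas : MeasurableSet A := hSmeas.inter (measurableSet_le (by fun_prop) measurable_const)
  have hAfin : μ A ≠ ⊤ := ((measure_mono inter_subset_left).trans_lt hSfin.lt_top).ne
  have hA : μ.real S ≤ 2 * μ.real A := by
    have := ENNReal.toReal_mono (ENNReal.mul_ne_top (by simp) hAfin)
      (measure_le_two_mul_measure_inter_inner_nonpos μ hSneg v)
    rwa [ENNReal.toReal_mul, ENNReal.toReal_ofNat] at this
  have hpt : ∀ w ∈ A, c * ρ₀ * (1 + ‖v‖ ^ 2) ^ (γ / 2) ≤ K ‖v - w‖ * ρ w := by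
    rintro w ⟨⟨hRw, hwR⟩, hvw⟩
    calc c * ρ₀ * (1 + ‖v‖ ^ 2) ^ (γ / 2) = c * (1 + ‖v‖ ^ 2) ^ (γ / 2) * ρ₀ := by ring
      _ ≤ c * ‖v - w‖ ^ γ * ρ w := by
          gcongr
          · exact rpow_le_norm_sub_rpow_of_inner_nonpos hvw (by linarith) hγ
          · exact hρ₀le w hwR.le
      _ ≤ K ‖v - w‖ * ρ w :=
          mul_le_mul_of_nonneg_right
            (hKge _ (hRw.le.trans (norm_le_norm_sub_of_inner_nonpos hvw))) (hρ0 w)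
  calc c * ρ₀ * μ.real S / 2 * (1 + ‖v‖ ^ 2) ^ (γ / 2)
      ≤ c * ρ₀ * (1 + ‖v‖ ^ 2) ^ (γ / 2) * μ.real A := by
        rw [mul_div_assoc, mul_right_comm]
        gcongr
        linarith
    _ ≤ ∫ w in A, K ‖v - w‖ * ρ w ∂μ :=
        setIntegral_ge_of_const_le_real hAmeas hAfin hpt (hint v).integrableOn
    _ ≤ ∫ w, K ‖v - w‖ * ρ w ∂μ :=
        setIntegral_le_integral (hint v)
          (ae_of_all _ fun w => mul_nonneg (hK0 _ (norm_nonneg _)) (hρ0 w))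

end KernelIntegral

theorem exists_bounds_integral_thresholdKernel_mul_gaussian {E : Type*} [NormedAddCommGroup E]
    [InnerProductSpace ℝ E] [FiniteDimensional ℝ E] [Nontrivial E] [MeasurableSpace E]
    [BorelSpace E] {C κ a γ c β : ℝ} (hC : 0 < C) (hκ : 0 < κ) (ha : 0 ≤ a) (hγ0 : 0 ≤ γ)
    (hγ1 : γ ≤ 1) (hc : 0 < c) (hβ : 0 < β) :
    ∃ cl cu : ℝ, 0 < cl ∧ cl ≤ cu ∧ ∀ v : E,
      cl * (1 + ‖v‖ ^ 2) ^ (γ / 2) ≤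
          ∫ w, thresholdKernel C κ a γ ‖v - w‖ * (c * Real.exp (-β * ‖w‖ ^ 2)) ∧
        ∫ w, thresholdKernel C κ a γ ‖v - w‖ * (c * Real.exp (-β * ‖w‖ ^ 2)) ≤
          cu * (1 + ‖v‖ ^ 2) ^ (γ / 2) := by
  have hK0 : ∀ g, 0 ≤ g → 0 ≤ thresholdKernel C κ a γ g := fun g => thresholdKernel_nonneg hC.le
  have hKge : ∀ g, 1 + √(2 * a) ≤ g → C * (κ / 2) ^ ((γ + 1) / 4) * g ^ γ ≤
      thresholdKernel C κ a γ g := fun g hg => by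
    have hsqrt := Real.sqrt_nonneg (2 * a)
    exact le_thresholdKernel hC.le hκ.le hγ0 (by linarith)
      ((Real.sqrt_le_left (by linarith)).mp (by linarith))
  have hKle : ∀ g, 0 ≤ g → thresholdKernel C κ a γ g ≤ C * κ ^ ((γ + 1) / 4) * g ^ γ :=
    fun g => thresholdKernel_le hC.le hκ.le ha hγ0
  have hρ0 : ∀ w : E, 0 ≤ c * Real.exp (-β * ‖w‖ ^ 2) := fun w => by positivity
  have hρint := integrable_one_add_norm_mul_exp_neg_mul_sq_norm (E := E) (c := c) hβ
  have hup := integral_kernel_norm_sub_mul_le hK0 (by positivity) hKle hγ0 hγ1 hρ0 hρint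
  obtain ⟨cl, hcl, hlow⟩ := exists_le_integral_kernel_norm_sub_mul volume
    (le_add_of_nonneg_right (Real.sqrt_nonneg _)) (by positivity) hK0 hKge hγ0 hρ0
    (exists_pos_le_mul_exp_neg_mul_sq_norm hc hβ.le _)
    (integrable_kernel_norm_sub_mul measurable_thresholdKernel hK0 (by positivity) hKle hγ0 hγ1
      (by fun_prop) hρ0 hρint)
  exact ⟨cl, _, hcl, le_max_left _ _, fun v =>
    ⟨hlow v, (hup v).trans (by gcongr; exact le_max_right _ _)⟩⟩

theorem chemical_collision_frequency_nu1_bounds_general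
    (m1 m2 m3 m4 E γ C c2 : ℝ)
    (hm1 : 0 < m1) (hm2 : 0 < m2) (hm3 : 0 < m3) (hm4 : 0 < m4)
    (hE : 0 ≤ E) (hγ0 : 0 ≤ γ) (hγ1 : γ ≤ 1)
    (hC : 0 < C) (hc2 : 0 < c2)
    (m12 m34 : ℝ)
    (hm12 : m12 = m1 * m2 / (m1 + m2)) (hm34 : m34 = m3 * m4 / (m3 + m4))
    (sph : Measure (Metric.sphere (0 : EuclideanSpace ℝ (Fin 3)) 1))
    (hsph : sph = (volume : Measure (EuclideanSpace ℝ (Fin 3))).toSphere)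
    (H : ℝ → ℝ) (hH : ∀ x, H x = if 0 ≤ x then 1 else 0)
    (b : ℝ → ℝ)
    (hbpos : ∀ e : EuclideanSpace ℝ (Fin 3), ‖e‖ = 1 →
      0 < ∫ σ : Metric.sphere (0 : EuclideanSpace ℝ (Fin 3)) 1,
        b ⟪e, (σ : EuclideanSpace ℝ (Fin 3))⟫ ∂sph)
    (μ2 : EuclideanSpace ℝ (Fin 3) → ℝ)
    (hμ2 : ∀ w, μ2 w = c2 * (m2 / (2 * Real.pi)) ^ ((3 : ℝ) / 2) * Real.exp (-m2 * ‖w‖ ^ 2 / 2))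
    (ν1 : EuclideanSpace ℝ (Fin 3) → ℝ)
    (hν1 : ∀ v, ν1 v = ∫ vs : EuclideanSpace ℝ (Fin 3),
      (∫ σ : Metric.sphere (0 : EuclideanSpace ℝ (Fin 3)) 1,
        H (‖v - vs‖ ^ 2 - 2 * E / m12) *
          (C * (Real.sqrt ((m12 / m34) * (‖v - vs‖ ^ 2 - 2 * E / m12))) ^ ((γ + 1) / 2) *
            ‖v - vs‖ ^ ((γ - 1) / 2) *
            b ⟪(‖v - vs‖⁻¹) • (v - vs), (σ : EuclideanSpace ℝ (Fin 3))⟫) *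
          μ2 vs ∂sph)) :
    ∃ νlow νup : ℝ, 0 < νlow ∧ νlow ≤ νup ∧
      ∀ v : EuclideanSpace ℝ (Fin 3),
        νlow * (1 + ‖v‖ ^ 2) ^ (γ / 2) ≤ ν1 v ∧ ν1 v ≤ νup * (1 + ‖v‖ ^ 2) ^ (γ / 2) := by
  subst hsph
  have hm12pos : 0 < m12 := hm12 ▸ by positivity
  have hκ : 0 < m12 / m34 := div_pos hm12pos (hm34 ▸ by positivity)
  obtain ⟨e, he⟩ := exists_norm_eq (EuclideanSpace ℝ (Fin 3)) zero_le_one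
  have hν : ∀ v, ν1 v = (∫ w, thresholdKernel C (m12 / m34) (2 * E / m12) γ ‖v - w‖ *
      (c2 * (m2 / (2 * Real.pi)) ^ ((3 : ℝ) / 2) * Real.exp (-(m2 / 2) * ‖w‖ ^ 2))) *
      ∫ σ : sphere (0 : EuclideanSpace ℝ (Fin 3)) 1, b ⟪e, (σ : _)⟫ ∂volume.toSphere := by
    intro v
    rw [hν1, ← integral_integral_toSphere_inner_normalize _ b v he]
    refine integral_congr_ae (ae_of_all _ fun w => integral_congr_ae (ae_of_all _ fun σ => ?_))
    simp only [hH, hμ2, thresholdKernel]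
    ring_nf
  obtain ⟨cl, cu, hcl, hclu, hbounds⟩ :=
    exists_bounds_integral_thresholdKernel_mul_gaussian (E := EuclideanSpace ℝ (Fin 3))
      (a := 2 * E / m12) (c := c2 * (m2 / (2 * Real.pi)) ^ ((3 : ℝ) / 2)) hC hκ (by positivity)
      hγ0 hγ1 (by positivity) (half_pos hm2)
  have hIb := hbpos e he
  refine ⟨cl * _, cu * _, mul_pos hcl hIb, by gcongr, fun v => ?_⟩
  rw [hν, mul_right_comm, mul_right_comm cu]
  exact ⟨by gcongr; exact (hbounds v).1, by gcongr; exact (hbounds v).2⟩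

/-- Equivalence of the endothermic chemical collision frequency `ν_1^CH` with the
weight `⟨v⟩^γ`, with explicit constants. -/
theorem chemical_collision_frequency_nu1_bounds
    (m1 m2 m3 m4 E γ C c2 : ℝ)
    (hm1 : 0 < m1) (hm2 : 0 < m2) (hm3 : 0 < m3) (hm4 : 0 < m4)
    (hmass : m1 + m2 = m3 + m4) (hE : 0 ≤ E) (hγ0 : 0 ≤ γ) (hγ1 : γ ≤ 1)
    (hC : 0 < C) (hc2 : 0 < c2)
    (m12 m34 : ℝ)
    (hm12 : m12 = m1 * m2 / (m1 + m2)) (hm34 : m34 = m3 * m4 / (m3 + m4))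
    (sph : Measure (Metric.sphere (0 : EuclideanSpace ℝ (Fin 3)) 1))
    (hsph : sph = (volume : Measure (EuclideanSpace ℝ (Fin 3))).toSphere)
    (H : ℝ → ℝ) (hH : ∀ x, H x = if 0 ≤ x then 1 else 0)
    (b : ℝ → ℝ) (hb : ∀ x, 0 ≤ b x)
    (hbint : ∀ e : EuclideanSpace ℝ (Fin 3), ‖e‖ = 1 →
      Integrable (fun σ : Metric.sphere (0 : EuclideanSpace ℝ (Fin 3)) 1 =>
        b ⟪e, (σ : EuclideanSpace ℝ (Fin 3))⟫) sph)
    (hbpos : ∀ e : EuclideanSpace ℝ (Fin 3), ‖e‖ = 1 →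
      0 < ∫ σ : Metric.sphere (0 : EuclideanSpace ℝ (Fin 3)) 1,
        b ⟪e, (σ : EuclideanSpace ℝ (Fin 3))⟫ ∂sph)
    (μ2 : EuclideanSpace ℝ (Fin 3) → ℝ)
    (hμ2 : ∀ w, μ2 w = c2 * (m2 / (2 * Real.pi)) ^ ((3 : ℝ) / 2) * Real.exp (-m2 * ‖w‖ ^ 2 / 2))
    (ν1 : EuclideanSpace ℝ (Fin 3) → ℝ)
    (hν1 : ∀ v, ν1 v = ∫ vs : EuclideanSpace ℝ (Fin 3),
      (∫ σ : Metric.sphere (0 : EuclideanSpace ℝ (Fin 3)) 1,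
        H (‖v - vs‖ ^ 2 - 2 * E / m12) *
          (C * (Real.sqrt ((m12 / m34) * (‖v - vs‖ ^ 2 - 2 * E / m12))) ^ ((γ + 1) / 2) *
            ‖v - vs‖ ^ ((γ - 1) / 2) *
            b ⟪(‖v - vs‖⁻¹) • (v - vs), (σ : EuclideanSpace ℝ (Fin 3))⟫) *
          μ2 vs ∂sph)) :
    ∃ νlow νup : ℝ, 0 < νlow ∧ νlow ≤ νup ∧
      ∀ v : EuclideanSpace ℝ (Fin 3),
        νlow * (1 + ‖v‖ ^ 2) ^ (γ / 2) ≤ ν1 v ∧ ν1 v ≤ νup * (1 + ‖v‖ ^ 2) ^ (γ / 2) :=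
  chemical_collision_frequency_nu1_bounds_general m1 m2 m3 m4 E γ C c2 hm1 hm2 hm3 hm4 hE hγ0 hγ1 hC
    hc2 m12 m34 hm12 hm34 sph hsph H hH b hbpos μ2 hμ2 ν1 hν1
end

section
/- Let h_i : ℝ^3 → ℝ, 1 ≤ i ≤ 4, be measurable functions such that (i) for every pair (i,j) and all admissible elastic collision velocities, h_i(v) + h_j(v_*) = h_i(v') + h_j(v'_*), where (v', v'_*) are the elastic post-collisional velocities for masses (m_i, m_j). Then there exist n_i ∈ ℝ, u ∈ ℝ^3, e ∈ ℝ such that h_i(v) = n_i + m_i u·v + m_i e |v|^2/2 for all i and a.e. v. -/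
/-!
Within one species, the collision `(v, w) ↦ (v + w, 0)` with `v ⟂ w` is elastic, so
`g = h_i - h_i(0)` is orthogonally additive: `g (v + w) = g v + g w` whenever `v ⟂ w`.
For a measurable orthogonally additive `g` on a space of dimension at least `3`, the odd part
is additive (a vector `u` orthogonal to `v` and `w` with `‖u‖² = |⟪v, w⟫|` turns any pair
into an orthogonal one), hence linear, hence `⟪b, ·⟫`; the even part is constant on spheres
and additive in `‖v‖²`, hence `c ‖v‖²`. Finally, a head-on collision between species `i` and
`j` forces `m_j b_i = m_i b_j` and `m_j c_i = m_i c_j`.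
-/

open MeasureTheory RealInnerProductSpace Module

theorem eq_mul_of_measurable_of_add_of_nonneg {f : ℝ → ℝ} (hf : Measurable f)
    (hadd : ∀ s t, 0 ≤ s → 0 ≤ t → f (s + t) = f s + f t) {t : ℝ} (ht : 0 ≤ t) :
    f t = f 1 * t := by
  have hsub : ∀ a b c d, 0 ≤ a → 0 ≤ b → 0 ≤ c → 0 ≤ d → a - b = c - d →
      f a - f b = f c - f d := by
    intro a b c d ha hb hc hd habcd
    have := hadd a d ha hd
    rw [show a + d = c + b by linarith, hadd c b hc hb] at this
    linarith
  -- `f` extends to the additive function `t ↦ f t⁺ - f t⁻` on all of `ℝ`.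
  let F : ℝ →+ ℝ := AddMonoidHom.mk' (fun t => f t⁺ - f t⁻) fun s t => by
    have hdecomp : (s + t)⁺ - (s + t)⁻ = (s⁺ + t⁺) - (s⁻ + t⁻) := by
      linarith [posPart_sub_negPart s, posPart_sub_negPart t, posPart_sub_negPart (s + t)]
    rw [hsub _ _ _ _ (posPart_nonneg _) (negPart_nonneg _)
      (add_nonneg (posPart_nonneg _) (posPart_nonneg _))
      (add_nonneg (negPart_nonneg _) (negPart_nonneg _)) hdecomp,
      hadd _ _ (posPart_nonneg _) (posPart_nonneg _),
      hadd _ _ (negPart_nonneg _) (negPart_nonneg _)]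
    ring
  have hF : ∀ t, 0 ≤ t → F t = f t := fun t ht => by
    have hf0 : f 0 = 0 := by simpa using hadd 0 0 le_rfl le_rfl
    simp [F, posPart_of_nonneg ht, negPart_of_nonneg ht, hf0]
  have hcont : Continuous F := Measure.AddMonoidHom.continuous_of_measurable F
    (show Measurable fun t => f t⁺ - f t⁻ by fun_prop)
  calc f t = F (t • 1) := by rw [smul_eq_mul, mul_one, hF t ht]
    _ = f 1 * t := by rw [map_real_smul F hcont, hF 1 zero_le_one, smul_eq_mul, mul_comm]

variable {E : Type*} [NormedAddCommGroup E] [InnerProductSpace ℝ E]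

open Finset in
theorem exists_norm_eq_forall_inner_eq_zero {s : Finset E} (hs : #s < finrank ℝ E) {r : ℝ}
    (hr : 0 ≤ r) :
    ∃ u : E, ‖u‖ = r ∧ ∀ v ∈ s, ⟪v, u⟫ = 0 := by
  set K := Submodule.span ℝ (s : Set E)
  have hK : K ≠ ⊤ := by
    intro htop
    have : finrank ℝ K ≤ #s := finrank_span_finset_le_card s
    rw [htop, finrank_top] at this
    omega
  have : Nontrivial Kᗮ :=
    Submodule.nontrivial_iff_ne_bot.2 (mt Submodule.orthogonal_eq_bot_iff.1 hK)
  obtain ⟨⟨u, hu⟩, hnorm⟩ := exists_norm_eq Kᗮ hr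
  exact ⟨u, hnorm, fun v hv => (K.mem_orthogonal u).1 hu v (Submodule.subset_span hv)⟩

theorem exists_norm_eq_inner_eq_zero_and_inner_eq_zero (hE : 3 ≤ finrank ℝ E) (v w : E) {r : ℝ}
    (hr : 0 ≤ r) :
    ∃ u : E, ‖u‖ = r ∧ ⟪v, u⟫ = 0 ∧ ⟪w, u⟫ = 0 := by
  classical
  obtain ⟨u, hu, hvw⟩ := exists_norm_eq_forall_inner_eq_zero (s := {v, w})
    (Finset.card_le_two.trans_lt (by omega)) hr
  exact ⟨u, hu, hvw v (by simp), hvw w (by simp)⟩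

def IsOrthogonallyAdditive (g : E → ℝ) : Prop :=
  ∀ v w : E, ⟪v, w⟫ = 0 → g (v + w) = g v + g w

namespace IsOrthogonallyAdditive

variable {g : E → ℝ}

theorem comp_neg (hg : IsOrthogonallyAdditive g) : IsOrthogonallyAdditive fun v => g (-v) :=
  fun v w hvw => by
    dsimp only
    rw [neg_add, hg _ _ (by rwa [inner_neg_neg])]

theorem add (hg : IsOrthogonallyAdditive g) {g' : E → ℝ} (hg' : IsOrthogonallyAdditive g') :
    IsOrthogonallyAdditive fun v => g v + g' v := fun v w hvw => by
  dsimp only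
  rw [hg v w hvw, hg' v w hvw]; ring

theorem sub (hg : IsOrthogonallyAdditive g) {g' : E → ℝ} (hg' : IsOrthogonallyAdditive g') :
    IsOrthogonallyAdditive fun v => g v - g' v := fun v w hvw => by
  dsimp only
  rw [hg v w hvw, hg' v w hvw]; ring

/-- `x` and `y` are the sum and difference of the orthogonal vectors `(x ± y) / 2`. -/
theorem apply_eq_of_norm_eq (hg : IsOrthogonallyAdditive g) (heven : ∀ v, g (-v) = g v)
    {x y : E} (hxy : ‖x‖ = ‖y‖) : g x = g y := by
  set v : E := (2 : ℝ)⁻¹ • (x + y)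
  set w : E := (2 : ℝ)⁻¹ • (x - y)
  have hvw : ⟪v, w⟫ = 0 := by
    simp only [v, w, real_inner_smul_left, real_inner_smul_right, inner_add_left,
      inner_sub_right, real_inner_self_eq_norm_sq, real_inner_comm x y, hxy]
    ring
  calc g x = g (v + w) := by congr 1; module
    _ = g (v + -w) := by
      rw [hg _ _ hvw, hg _ _ (by rw [inner_neg_right, hvw, neg_zero]), heven]
    _ = g y := by congr 1; module

theorem map_add_of_inner_nonneg (hg : IsOrthogonallyAdditive g) (hE : 3 ≤ finrank ℝ E)
    (hodd : ∀ v, g (-v) = -g v) {v w : E} (hvw : 0 ≤ ⟪v, w⟫) : g (v + w) = g v + g w := by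
  obtain ⟨u, hu, hvu, hwu⟩ :=
    exists_norm_eq_inner_eq_zero_and_inner_eq_zero hE v w (Real.sqrt_nonneg ⟪v, w⟫)
  have horth : ⟪v + u, w + -u⟫ = 0 := by
    rw [inner_add_left, inner_add_right, inner_add_right, inner_neg_right, inner_neg_right,
      real_inner_comm w u, hvu, hwu, real_inner_self_eq_norm_sq, hu, Real.sq_sqrt hvw]
    ring
  calc g (v + w) = g ((v + u) + (w + -u)) := by congr 1; abel
    _ = g v + g w := by
      rw [hg _ _ horth, hg _ _ hvu, hg _ _ (by rw [inner_neg_right, hwu, neg_zero]), hodd]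
      ring

theorem map_add_of_odd (hg : IsOrthogonallyAdditive g) (hE : 3 ≤ finrank ℝ E)
    (hodd : ∀ v, g (-v) = -g v) (v w : E) : g (v + w) = g v + g w := by
  rcases le_or_gt 0 ⟪v, w⟫ with hvw | hvw
  · exact hg.map_add_of_inner_nonneg hE hodd hvw
  obtain ⟨u, hu, hvu, hwu⟩ :=
    exists_norm_eq_inner_eq_zero_and_inner_eq_zero hE v w (Real.sqrt_nonneg (-⟪v, w⟫))
  have horth : ⟪v + u, w + u⟫ = 0 := by
    rw [inner_add_left, inner_add_right, inner_add_right, real_inner_comm w u, hvu, hwu,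
      real_inner_self_eq_norm_sq, hu, Real.sq_sqrt (by linarith)]
    ring
  have hvw_uu : ⟪v + w, u + u⟫ = 0 := by
    rw [inner_add_left, inner_add_right, inner_add_right, hvu, hwu]; ring
  have huu : g (u + u) = g u + g u :=
    hg.map_add_of_inner_nonneg hE hodd (real_inner_self_nonneg)
  have := hg _ _ hvw_uu
  rw [show v + w + (u + u) = (v + u) + (w + u) by abel, hg _ _ horth, hg _ _ hvu, hg _ _ hwu,
    huu] at this
  linarith

section Measurable

variable [MeasurableSpace E] [BorelSpace E]

theorem exists_eq_mul_norm_sq_of_even (hg : IsOrthogonallyAdditive g) (hE : 2 ≤ finrank ℝ E)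
    (hmeas : Measurable g) (heven : ∀ v, g (-v) = g v) : ∃ c : ℝ, ∀ v, g v = c * ‖v‖ ^ 2 := by
  obtain ⟨e, he, -⟩ := exists_norm_eq_forall_inner_eq_zero (s := (∅ : Finset E))
    (by rw [Finset.card_empty]; omega) zero_le_one
  obtain ⟨e', he', hee'⟩ := exists_norm_eq_forall_inner_eq_zero (s := {e})
    (by rw [Finset.card_singleton]; omega) zero_le_one
  have hnorm : ∀ {e : E}, ‖e‖ = 1 → ∀ t, ‖√t • e‖ = √t := fun he t => by
    rw [norm_smul, he, mul_one, Real.norm_of_nonneg (Real.sqrt_nonneg t)]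
  have hadd : ∀ s t, 0 ≤ s → 0 ≤ t → g (√(s + t) • e) = g (√s • e) + g (√t • e) := by
    intro s t hs ht
    have horth : ⟪√s • e, √t • e'⟫ = 0 := by
      rw [real_inner_smul_left, real_inner_smul_right, hee' e (Finset.mem_singleton_self e)]
      ring
    have hsum : ‖√(s + t) • e‖ = ‖√s • e + √t • e'‖ := by
      rw [hnorm he, ← Real.sqrt_sq (norm_nonneg _), norm_add_sq_real, horth, hnorm he, hnorm he',
        Real.sq_sqrt hs, Real.sq_sqrt ht]
      ring_nf
    rw [hg.apply_eq_of_norm_eq heven hsum, hg _ _ horth,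
      hg.apply_eq_of_norm_eq heven (x := √t • e') (by rw [hnorm he, hnorm he'])]
  refine ⟨g e, fun v => ?_⟩
  have hlin := eq_mul_of_measurable_of_add_of_nonneg (f := fun t => g (√t • e)) (by fun_prop)
    hadd (sq_nonneg ‖v‖)
  simp only [Real.sqrt_one, one_smul, Real.sqrt_sq (norm_nonneg v)] at hlin
  rw [← hlin]
  exact hg.apply_eq_of_norm_eq heven (by rw [norm_smul, he, mul_one, norm_norm])

theorem exists_eq_inner_of_odd [FiniteDimensional ℝ E] (hg : IsOrthogonallyAdditive g)
    (hE : 3 ≤ finrank ℝ E) (hmeas : Measurable g) (hodd : ∀ v, g (-v) = -g v) :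
    ∃ b : E, ∀ v, g v = ⟪b, v⟫ := by
  let G : E →+ ℝ := AddMonoidHom.mk' g (hg.map_add_of_odd hE hodd)
  let L : StrongDual ℝ E :=
    G.toRealLinearMap (Measure.AddMonoidHom.continuous_of_measurable G hmeas)
  exact ⟨(InnerProductSpace.toDual ℝ E).symm L, fun v => by
    rw [InnerProductSpace.toDual_symm_apply]; rfl⟩

theorem exists_eq_inner_add_mul_norm_sq [FiniteDimensional ℝ E] (hg : IsOrthogonallyAdditive g)
    (hE : 3 ≤ finrank ℝ E) (hmeas : Measurable g) :
    ∃ (b : E) (c : ℝ), ∀ v, g v = ⟪b, v⟫ + c * ‖v‖ ^ 2 := by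
  have hmeas_neg : Measurable fun v => g (-v) := hmeas.comp measurable_neg
  obtain ⟨b, hb⟩ := (hg.sub hg.comp_neg).exists_eq_inner_of_odd hE (hmeas.sub hmeas_neg)
    (fun v => by simp only [neg_neg]; ring)
  obtain ⟨c, hc⟩ := (hg.add hg.comp_neg).exists_eq_mul_norm_sq_of_even (by omega)
    (hmeas.add hmeas_neg) (fun v => by simp only [neg_neg]; ring)
  refine ⟨(2 : ℝ)⁻¹ • b, c / 2, fun v => ?_⟩
  have := hb v
  have := hc v
  rw [real_inner_smul_left]
  linarith

end Measurable

end IsOrthogonallyAdditive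

theorem eq_zero_and_eq_zero_of_forall_inner_add_mul_norm_sq_eq_zero [Nontrivial E] {b : E}
    {c : ℝ} (h : ∀ x, ⟪b, x⟫ + c * ‖x‖ ^ 2 = 0) : b = 0 ∧ c = 0 := by
  have hb : b = 0 := by
    have := h b
    have := h (-b)
    rw [inner_neg_right, norm_neg] at this
    exact (inner_self_eq_zero (𝕜 := ℝ)).1 (by linarith)
  obtain ⟨x, hx⟩ := exists_norm_eq E zero_le_one
  refine ⟨hb, ?_⟩
  simpa [hb, hx] using h x

def IsCollisionInvariantPair (m₁ m₂ : ℝ) (f₁ f₂ : E → ℝ) : Prop :=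
  ∀ v vs v' vs' : E, m₁ • v + m₂ • vs = m₁ • v' + m₂ • vs' →
    (1 / 2) * m₁ * ‖v‖ ^ 2 + (1 / 2) * m₂ * ‖vs‖ ^ 2
      = (1 / 2) * m₁ * ‖v'‖ ^ 2 + (1 / 2) * m₂ * ‖vs'‖ ^ 2 →
    f₁ v + f₂ vs = f₁ v' + f₂ vs'

namespace IsCollisionInvariantPair

variable {m m₁ m₂ : ℝ} {f f₁ f₂ : E → ℝ}

theorem isOrthogonallyAdditive_sub_apply_zero (hf : IsCollisionInvariantPair m m f f) :
    IsOrthogonallyAdditive fun v => f v - f 0 := fun v w hvw => by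
  have := hf v w (v + w) 0 (by rw [smul_add, smul_zero, add_zero])
    (by rw [norm_add_sq_real, hvw, norm_zero]; ring)
  linarith

/-- The head-on collision `((m₁ + m₂) y, 0) ↦ ((m₁ - m₂) y, 2 m₁ y)` is elastic. -/
theorem smul_eq_smul_and_mul_eq_mul [Nontrivial E] (hf : IsCollisionInvariantPair m₁ m₂ f₁ f₂)
    (hm₁ : m₁ ≠ 0) {a₁ a₂ c₁ c₂ : ℝ} {b₁ b₂ : E}
    (hf₁ : ∀ v, f₁ v = a₁ + ⟪b₁, v⟫ + c₁ * ‖v‖ ^ 2)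
    (hf₂ : ∀ v, f₂ v = a₂ + ⟪b₂, v⟫ + c₂ * ‖v‖ ^ 2) :
    m₂ • b₁ = m₁ • b₂ ∧ m₂ * c₁ = m₁ * c₂ := by
  have hnorm : ∀ (t : ℝ) (y : E), ‖t • y‖ ^ 2 = t ^ 2 * ‖y‖ ^ 2 := fun t y => by
    rw [norm_smul, mul_pow, Real.norm_eq_abs, sq_abs]
  have hvanish : ∀ y : E,
      ⟪(2 : ℝ) • (m₂ • b₁ - m₁ • b₂), y⟫ + 4 * m₁ * (m₂ * c₁ - m₁ * c₂) * ‖y‖ ^ 2 = 0 := by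
    intro y
    have := hf ((m₁ + m₂) • y) 0 ((m₁ - m₂) • y) ((2 * m₁) • y) (by module)
      (by rw [hnorm, hnorm, hnorm, norm_zero]; ring)
    rw [hf₁, hf₁, hf₂, hf₂] at this
    simp only [inner_smul_left, inner_smul_right, inner_sub_left, inner_zero_right, norm_zero,
      hnorm, conj_trivial] at this ⊢
    linear_combination this
  obtain ⟨hb, hc⟩ := eq_zero_and_eq_zero_of_forall_inner_add_mul_norm_sq_eq_zero hvanish
  refine ⟨sub_eq_zero.1 ((smul_eq_zero.1 hb).resolve_left two_ne_zero), ?_⟩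
  have : m₁ * (m₂ * c₁ - m₁ * c₂) = 0 := by linarith
  exact sub_eq_zero.1 ((mul_eq_zero.1 this).resolve_left hm₁)

end IsCollisionInvariantPair

/-- Characterization of elastic collision invariants for a 4-species mixture:
any measurable family satisfying the elastic Cauchy functional equations is,
almost everywhere, of the form `n_i + m_i u·v + m_i e |v|^2/2`. -/
theorem elastic_collision_invariants
    (m : Fin 4 → ℝ) (hm : ∀ i, 0 < m i)
    (h : Fin 4 → EuclideanSpace ℝ (Fin 3) → ℝ)
    (hmeas : ∀ i, Measurable (h i))
    (hcauchy : ∀ i j : Fin 4, ∀ v vs v' vs' : EuclideanSpace ℝ (Fin 3),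
      m i • v + m j • vs = m i • v' + m j • vs' →
      (1 / 2) * m i * ‖v‖ ^ 2 + (1 / 2) * m j * ‖vs‖ ^ 2
        = (1 / 2) * m i * ‖v'‖ ^ 2 + (1 / 2) * m j * ‖vs'‖ ^ 2 →
      h i v + h j vs = h i v' + h j vs') :
    ∃ (n : Fin 4 → ℝ) (u : EuclideanSpace ℝ (Fin 3)) (e : ℝ),
      ∀ i : Fin 4, ∀ᵐ v : EuclideanSpace ℝ (Fin 3),
        h i v = n i + m i * ⟪u, v⟫ + m i * e * ‖v‖ ^ 2 / 2 := by
  have hform : ∀ i, ∃ (b : EuclideanSpace ℝ (Fin 3)) (c : ℝ),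
      ∀ v, h i v = h i 0 + ⟪b, v⟫ + c * ‖v‖ ^ 2 := fun i => by
    obtain ⟨b, c, hbc⟩ := (IsCollisionInvariantPair.isOrthogonallyAdditive_sub_apply_zero
      (hcauchy i i)).exists_eq_inner_add_mul_norm_sq (by simp) ((hmeas i).sub_const _)
    exact ⟨b, c, fun v => by linarith [hbc v]⟩
  choose b c hbc using hform
  have hrel i := IsCollisionInvariantPair.smul_eq_smul_and_mul_eq_mul (hcauchy i 0) (hm i).ne'
    (hbc i) (hbc 0)
  refine ⟨fun i => h i 0, (m 0)⁻¹ • b 0, 2 * c 0 / m 0, fun i => .of_forall fun v => ?_⟩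
  have hb : m 0 * ⟪b i, v⟫ = m i * ⟪b 0, v⟫ := by
    simpa only [inner_smul_left, conj_trivial] using congrArg (⟪·, v⟫) (hrel i).1
  have hm0 := (hm 0).ne'
  rw [hbc i v, inner_smul_left, conj_trivial]
  field_simp
  linear_combination ‖v‖ ^ 2 * (hrel i).2 + hb
end
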